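/- The linear span of the family of vector fields {∇E_{kl} : k, l ≥ 1} ∪ {curl_Γ H_{kl} : k, l ∈ ℕ, (k,l) ≠ (0,0)} is dense in the Hilbert space L²((0,1)²; ℝ²), where E_{kl}(x,y) = sin(kπx) sin(lπy) and H_{kl}(x,y) = cos(kπx) cos(lπy). -/

import Mathlib

/-!
If an `L²` field `g = (g₀, g₁)` is orthogonal to all TM and TE modes, then for each `(k, l)` the
coefficients `a = ∫ cos(kπx) sin(lπy) g₀` and `b = ∫ sin(kπx) cos(lπy) g₁` satisfy
`k a + l b = 0` and `-l a + k b = 0`, hence vanish. Since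
`2 sin(πy) cos(lπy) = sin((l+1)πy) - sin((l-1)πy)`, the function `sin(πy) g₀` is then orthogonal
to every `cos(kπx) cos(lπy)`. These span an algebra separating the points of the closed square, so
by Stone–Weierstrass it approximates every test function uniformly there, and `sin(πy) g₀`, hence
`g₀`, vanishes almost everywhere. Swapping the coordinates gives the same for `g₁`.
-/

open Real MeasureTheory

/-- A pair of reals as a vector in `EuclideanSpace ℝ (Fin 2)`. -/
noncomputable def vec2 (a b : ℝ) : EuclideanSpace ℝ (Fin 2) :=
  (WithLp.equiv 2 (Fin 2 → ℝ)).symm ![a, b]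

open Set
open scoped ENNReal

theorem ContinuousMap.exists_mem_subalgebra_near_on_isCompact {X : Type*} [TopologicalSpace X]
    {A : Subalgebra ℝ C(X, ℝ)} {K : Set X} (hK : IsCompact K)
    (hA : ∀ x ∈ K, ∀ y ∈ K, x ≠ y → ∃ a ∈ A, a x ≠ a y) (f : C(X, ℝ)) {ε : ℝ} (hε : 0 < ε) :
    ∃ a ∈ A, ∀ x ∈ K, |a x - f x| < ε := by
  have : CompactSpace K := isCompact_iff_compactSpace.mp hK
  let restrictK : C(X, ℝ) →ₐ[ℝ] C(K, ℝ) :=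
    (ContinuousMap.compStarAlgHom' ℝ ℝ ⟨Subtype.val, continuous_subtype_val⟩).toAlgHom
  have hsep : (A.map restrictK).SeparatesPoints := by
    intro x y hxy
    obtain ⟨a, ha, hne⟩ := hA x x.2 y y.2 (Subtype.coe_ne_coe.mpr hxy)
    exact ⟨_, ⟨restrictK a, Subalgebra.mem_map.2 ⟨a, ha, rfl⟩, rfl⟩, hne⟩
  obtain ⟨⟨_, haK⟩, hclose⟩ :=
    ContinuousMap.exists_mem_subalgebra_near_continuous_of_separatesPoints _ hsep (K.domRestrict f)
      f.continuous.continuousOn.domRestrict ε hε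
  obtain ⟨a, ha, rfl⟩ := Subalgebra.mem_map.mp haK
  exact ⟨a, ha, fun x hx => hclose ⟨x, hx⟩⟩

section ConcentratedOnCompact

variable {X : Type*} [TopologicalSpace X] [MeasurableSpace X] [OpensMeasurableSpace X]
  {μ : Measure X} {K : Set X}

theorem MeasureTheory.Integrable.continuous_mul_of_ae_mem_isCompact (hK : IsCompact K)
    (hμK : ∀ᵐ x ∂μ, x ∈ K) {a G : X → ℝ} (ha : Continuous a) (hG : Integrable G μ) :
    Integrable (fun x => a x * G x) μ := by
  obtain ⟨C, hC⟩ := hK.exists_bound_of_continuousOn ha.continuousOn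
  exact hG.bdd_mul ha.aestronglyMeasurable (hμK.mono hC)

theorem Continuous.memLp_of_ae_mem_isCompact [IsFiniteMeasure μ] {E : Type*}
    [NormedAddCommGroup E] [SecondCountableTopology E] (hK : IsCompact K)
    (hμK : ∀ᵐ x ∂μ, x ∈ K) {F : X → E} (hF : Continuous F) (p : ℝ≥0∞) : MemLp F p μ := by
  obtain ⟨C, hC⟩ := hK.exists_bound_of_continuousOn hF.continuousOn
  exact MemLp.of_bound hF.aestronglyMeasurable C (hμK.mono hC)

theorem integral_mul_eq_zero_of_mem_span (hK : IsCompact K) (hμK : ∀ᵐ x ∂μ, x ∈ K)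
    {G : X → ℝ} (hG : Integrable G μ) {s : Set C(X, ℝ)}
    (hs : ∀ a ∈ s, ∫ x, a x * G x ∂μ = 0) {a : C(X, ℝ)} (ha : a ∈ Submodule.span ℝ s) :
    ∫ x, a x * G x ∂μ = 0 := by
  have hint (b : C(X, ℝ)) := hG.continuous_mul_of_ae_mem_isCompact hK hμK b.continuous
  let integralMul : C(X, ℝ) →ₗ[ℝ] ℝ :=
    { toFun := fun b => ∫ x, b x * G x ∂μ
      map_add' := fun b c => by
        simp only [ContinuousMap.add_apply, add_mul]
        exact integral_add (hint b) (hint c)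
      map_smul' := fun c b => by
        simp only [ContinuousMap.smul_apply, smul_eq_mul, mul_assoc, RingHom.id_apply]
        exact integral_const_mul c _ }
  exact (Submodule.span_le (p := LinearMap.ker integralMul)).2 hs ha

end ConcentratedOnCompact

theorem ae_eq_zero_of_forall_integral_mul_eq_zero_of_separatesPoints {E : Type*}
    [NormedAddCommGroup E] [NormedSpace ℝ E] [FiniteDimensional ℝ E] [MeasurableSpace E]
    [BorelSpace E] {μ : Measure E} {K : Set E} (hK : IsCompact K) (hμK : ∀ᵐ x ∂μ, x ∈ K)
    {A : Subalgebra ℝ C(E, ℝ)} (hA : ∀ x ∈ K, ∀ y ∈ K, x ≠ y → ∃ a ∈ A, a x ≠ a y)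
    {G : E → ℝ} (hG : Integrable G μ) (h : ∀ a ∈ A, ∫ x, a x * G x ∂μ = 0) :
    G =ᵐ[μ] 0 := by
  refine ae_eq_zero_of_integral_contDiff_smul_eq_zero hG.locallyIntegrable fun φ hφ _ => ?_
  have hint {a : E → ℝ} (ha : Continuous a) := hG.continuous_mul_of_ae_mem_isCompact hK hμK ha
  set c := ∫ x, |G x| ∂μ
  have hc : 0 ≤ c := integral_nonneg fun x => abs_nonneg _
  have hsmall : ∀ ε > 0, |∫ x, φ x * G x ∂μ| ≤ ε * c := by
    intro ε hε
    obtain ⟨a, ha, hclose⟩ :=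
      ContinuousMap.exists_mem_subalgebra_near_on_isCompact hK hA ⟨φ, hφ.continuous⟩ hε
    calc |∫ x, φ x * G x ∂μ| = |∫ x, (φ x - a x) * G x ∂μ| := by
          simp only [sub_mul]
          rw [integral_sub (hint hφ.continuous) (hint a.continuous), h a ha, sub_zero]
      _ ≤ ∫ x, |(φ x - a x) * G x| ∂μ := abs_integral_le_integral_abs
      _ ≤ ∫ x, ε * |G x| ∂μ := by
          refine integral_mono_ae (hint (hφ.continuous.sub a.continuous)).abs
            (hG.abs.const_mul ε) ?_
          filter_upwards [hμK] with x hx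
          rw [abs_mul, abs_sub_comm]
          gcongr
          exact (hclose x hx).le
      _ = ε * c := integral_const_mul ε _
  simp only [smul_eq_mul]
  refine abs_nonpos_iff.mp (le_of_forall_gt_imp_ge_of_dense fun ε hε => ?_)
  calc |∫ x, φ x * G x ∂μ| ≤ ε / (c + 1) * c := hsmall _ (by positivity)
    _ ≤ ε := by
        rw [div_mul_eq_mul_div, div_le_iff₀ (by positivity)]
        nlinarith

section EuclideanL2

variable {α : Type*} [MeasurableSpace α] {μ : Measure α}

theorem MeasureTheory.Lp.memLp_apply {ι : Type*} [Fintype ι] {p : ℝ≥0∞}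
    (f : Lp (EuclideanSpace ℝ ι) p μ) (i : ι) : MemLp (fun x => f x i) p μ :=
  (EuclideanSpace.proj (𝕜 := ℝ) i).comp_memLp f

theorem MeasureTheory.L2.inner_eq_sum_integral_mul {ι : Type*} [Fintype ι]
    (f g : Lp (EuclideanSpace ℝ ι) 2 μ) :
    inner ℝ f g = ∑ i, ∫ x, f x i * g x i ∂μ := by
  rw [L2.inner_def, ← integral_finsetSum _ fun i _ => ?_]
  · congr with x
    simp [PiLp.inner_apply, mul_comm]
  · exact (Lp.memLp_apply f i).integrable_mul (Lp.memLp_apply g i)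

@[simp] theorem vec2_apply_zero (a b : ℝ) : vec2 a b 0 = a := rfl

@[simp] theorem vec2_apply_one (a b : ℝ) : vec2 a b 1 = b := rfl

@[fun_prop] theorem Continuous.vec2 {X : Type*} [TopologicalSpace X] {a b : X → ℝ}
    (ha : Continuous a) (hb : Continuous b) : Continuous fun x => vec2 (a x) (b x) := by
  refine (PiLp.continuous_toLp 2 _).comp (continuous_pi fun i => ?_)
  fin_cases i <;> simpa

theorem inner_toLp_eq_of_ae_eq_vec2 {F : α → EuclideanSpace ℝ (Fin 2)} (hF : MemLp F 2 μ)
    (c d : ℝ) {a b : α → ℝ} (hFab : ∀ᵐ x ∂μ, F x = vec2 (c * a x) (d * b x))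
    (g : Lp (EuclideanSpace ℝ (Fin 2)) 2 μ) :
    inner ℝ (hF.toLp F) g = c * ∫ x, a x * g x 0 ∂μ + d * ∫ x, b x * g x 1 ∂μ := by
  rw [L2.inner_eq_sum_integral_mul, Fin.sum_univ_two, ← integral_const_mul, ← integral_const_mul]
  congr 1 <;> refine integral_congr_ae ?_ <;> filter_upwards [hF.coeFn_toLp, hFab] with x hx hx'
    <;> simp [hx, hx', mul_assoc]

end EuclideanL2

noncomputable abbrev μΓ : Measure (ℝ × ℝ) := volume.restrict (Ioo (0 : ℝ) 1 ×ˢ Ioo (0 : ℝ) 1)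

instance : IsFiniteMeasure μΓ :=
  isFiniteMeasure_restrict.2
    ((Metric.isBounded_Ioo 0 1).prod (Metric.isBounded_Ioo 0 1)).measure_lt_top.ne

theorem ae_mem_unitSquare : ∀ᵐ p ∂μΓ, p ∈ Ioo (0 : ℝ) 1 ×ˢ Ioo (0 : ℝ) 1 :=
  ae_restrict_mem (measurableSet_Ioo.prod measurableSet_Ioo)

theorem ae_mem_closedUnitSquare : ∀ᵐ p ∂μΓ, p ∈ Icc (0 : ℝ) 1 ×ˢ Icc (0 : ℝ) 1 :=
  ae_mem_unitSquare.mono fun _ hp => prod_mono Ioo_subset_Icc_self Ioo_subset_Icc_self hp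

theorem isCompact_closedUnitSquare : IsCompact (Icc (0 : ℝ) 1 ×ˢ Icc (0 : ℝ) 1) :=
  isCompact_Icc.prod isCompact_Icc

theorem measurePreserving_swap_unitSquare : MeasurePreserving Prod.swap μΓ μΓ := by
  have := (Measure.measurePreserving_swap (μ := (volume : Measure ℝ)) (ν := volume))
    |>.restrict_preimage (s := Ioo (0 : ℝ) 1 ×ˢ Ioo (0 : ℝ) 1)
      (measurableSet_Ioo.prod measurableSet_Ioo)
  rwa [preimage_swap_prod, ← Measure.volume_eq_prod] at this

theorem integral_comp_swap_unitSquare (F : ℝ × ℝ → ℝ) :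
    ∫ p, F p.swap ∂μΓ = ∫ p, F p ∂μΓ :=
  measurePreserving_swap_unitSquare.integral_comp' (f := MeasurableEquiv.prodComm) F

noncomputable def cosCos (k l : ℤ) : C(ℝ × ℝ, ℝ) :=
  ⟨fun p => cos (k * π * p.1) * cos (l * π * p.2), by fun_prop⟩

theorem cosCos_apply (k l : ℤ) (p : ℝ × ℝ) :
    cosCos k l p = cos (k * π * p.1) * cos (l * π * p.2) := rfl

theorem cosCos_mul (k l k' l' : ℤ) :
    cosCos k l * cosCos k' l' = (1 / 4 : ℝ) • (cosCos (k + k') (l + l') + cosCos (k + k') (l - l')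
      + cosCos (k - k') (l + l') + cosCos (k - k') (l - l')) := by
  ext p
  simp only [ContinuousMap.mul_apply, ContinuousMap.smul_apply, ContinuousMap.add_apply,
    cosCos_apply, smul_eq_mul, Int.cast_add, Int.cast_sub, add_mul, sub_mul, cos_add, cos_sub]
  ring

theorem cosCos_zero_zero : cosCos 0 0 = 1 := by
  ext p; simp [cosCos_apply]

noncomputable def cosineSpan : Submodule ℝ C(ℝ × ℝ, ℝ) :=
  Submodule.span ℝ (range (Function.uncurry cosCos))

theorem cosCos_mem_cosineSpan (k l : ℤ) : cosCos k l ∈ cosineSpan :=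
  Submodule.subset_span ⟨(k, l), rfl⟩

theorem cosineSpan_mul_le : cosineSpan * cosineSpan ≤ cosineSpan := by
  rw [cosineSpan, Submodule.span_mul_span, Submodule.span_le]
  rintro _ ⟨_, ⟨⟨k, l⟩, rfl⟩, _, ⟨⟨k', l'⟩, rfl⟩, rfl⟩
  simp only [Function.uncurry_apply_pair, cosCos_mul]
  exact Submodule.smul_mem _ _ (add_mem (add_mem (add_mem (cosCos_mem_cosineSpan _ _)
    (cosCos_mem_cosineSpan _ _)) (cosCos_mem_cosineSpan _ _)) (cosCos_mem_cosineSpan _ _))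

noncomputable def cosineAlgebra : Subalgebra ℝ C(ℝ × ℝ, ℝ) :=
  cosineSpan.toSubalgebra (cosCos_zero_zero ▸ cosCos_mem_cosineSpan 0 0)
    (fun _ _ ha hb => cosineSpan_mul_le (Submodule.mul_mem_mul ha hb))

theorem cosCos_mem_cosineAlgebra (k l : ℤ) : cosCos k l ∈ cosineAlgebra :=
  cosCos_mem_cosineSpan k l

theorem injOn_cos_pi_mul : InjOn (fun t => cos (π * t)) (Icc 0 1) := by
  have hmaps : MapsTo (π * ·) (Icc (0 : ℝ) 1) (Icc 0 π) := fun t ht =>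
    ⟨by nlinarith [ht.1, pi_pos], by nlinarith [ht.2, pi_pos]⟩
  exact injOn_cos.comp ((mul_right_injective₀ pi_ne_zero).injOn) hmaps

theorem cosineAlgebra_separatesPoints_closedUnitSquare :
    ∀ x ∈ Icc (0 : ℝ) 1 ×ˢ Icc (0 : ℝ) 1, ∀ y ∈ Icc (0 : ℝ) 1 ×ˢ Icc (0 : ℝ) 1,
      x ≠ y → ∃ a ∈ cosineAlgebra, a x ≠ a y := by
  intro x hx y hy hxy
  obtain h | h : x.1 ≠ y.1 ∨ x.2 ≠ y.2 := by
    contrapose! hxy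
    exact Prod.ext hxy.1 hxy.2
  · refine ⟨cosCos 1 0, cosCos_mem_cosineAlgebra 1 0, fun hcos => h (injOn_cos_pi_mul hx.1 hy.1 ?_)⟩
    simpa [cosCos_apply] using hcos
  · refine ⟨cosCos 0 1, cosCos_mem_cosineAlgebra 0 1, fun hcos => h (injOn_cos_pi_mul hx.2 hy.2 ?_)⟩
    simpa [cosCos_apply] using hcos

noncomputable def cosSin (k l : ℝ) (p : ℝ × ℝ) : ℝ := cos (k * π * p.1) * sin (l * π * p.2)

@[fun_prop] theorem continuous_cosSin (k l : ℝ) : Continuous (cosSin k l) := by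
  unfold cosSin; fun_prop

@[simp] theorem cosSin_neg_left (k l : ℝ) : cosSin (-k) l = cosSin k l := by
  ext p; simp [cosSin]

@[simp] theorem cosSin_neg_right (k l : ℝ) : cosSin k (-l) = -cosSin k l := by
  ext p; simp [cosSin]

@[simp] theorem cosSin_zero_right (k : ℝ) : cosSin k 0 = 0 := by
  ext p; simp [cosSin]

theorem cosCos_mul_sin (k l : ℤ) (p : ℝ × ℝ) :
    cosCos k l p * sin (π * p.2) = (cosSin k (l + 1 : ℤ) p - cosSin k (l - 1 : ℤ) p) / 2 := by
  simp only [cosCos_apply, cosSin, Int.cast_add, Int.cast_sub, Int.cast_one, add_mul, sub_mul,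
    one_mul, sin_add, sin_sub]
  ring

theorem ae_eq_zero_of_forall_integral_cosSin_mul_eq_zero {h : ℝ × ℝ → ℝ} (hh : Integrable h μΓ)
    (horth : ∀ k l : ℕ, ∫ p, cosSin k l p * h p ∂μΓ = 0) : h =ᵐ[μΓ] 0 := by
  have hint {a : ℝ × ℝ → ℝ} (ha : Continuous a) :=
    hh.continuous_mul_of_ae_mem_isCompact isCompact_closedUnitSquare ae_mem_closedUnitSquare ha
  have horthZ (k l : ℤ) : ∫ p, cosSin k l p * h p ∂μΓ = 0 := by
    obtain ⟨m, rfl | rfl⟩ := Int.eq_nat_or_neg k <;>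
      obtain ⟨n, rfl | rfl⟩ := Int.eq_nat_or_neg l <;> simp [integral_neg, horth]
  have hweighted : ∀ a ∈ cosineAlgebra, ∫ p, a p * (sin (π * p.2) * h p) ∂μΓ = 0 := by
    intro a ha
    refine integral_mul_eq_zero_of_mem_span isCompact_closedUnitSquare ae_mem_closedUnitSquare
      (hint (by fun_prop)) ?_ ha
    rintro _ ⟨⟨k, l⟩, rfl⟩
    calc ∫ p, cosCos k l p * (sin (π * p.2) * h p) ∂μΓ
        = (∫ p, cosSin k (l + 1 : ℤ) p * h p ∂μΓ - ∫ p, cosSin k (l - 1 : ℤ) p * h p ∂μΓ) / 2 := by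
          rw [← integral_sub (hint (by fun_prop)) (hint (by fun_prop)), ← integral_div]
          congr with p
          rw [← mul_assoc, cosCos_mul_sin]
          ring
      _ = 0 := by rw [horthZ, horthZ, sub_zero, zero_div]
  have hsinh := ae_eq_zero_of_forall_integral_mul_eq_zero_of_separatesPoints
    isCompact_closedUnitSquare ae_mem_closedUnitSquare
    cosineAlgebra_separatesPoints_closedUnitSquare (hint (by fun_prop)) hweighted
  filter_upwards [hsinh, ae_mem_unitSquare] with p hp hmem
  have hsin : 0 < sin (π * p.2) :=
    sin_pos_of_pos_of_lt_pi (by nlinarith [hmem.2.1, pi_pos]) (by nlinarith [hmem.2.2, pi_pos])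
  exact (mul_eq_zero.1 hp).resolve_left hsin.ne'

-- `∇E_{kl}` and `curl_Γ H_{kl}`, spelled as in the theorem so that membership in its sets is
-- definitional.
noncomputable def tmField (k l : ℝ) (p : ℝ × ℝ) : EuclideanSpace ℝ (Fin 2) :=
  vec2 (deriv (fun t : ℝ => sin (k * π * t) * sin (l * π * p.2)) p.1)
    (deriv (fun t : ℝ => sin (k * π * p.1) * sin (l * π * t)) p.2)

noncomputable def teField (k l : ℝ) (p : ℝ × ℝ) : EuclideanSpace ℝ (Fin 2) :=
  vec2 (deriv (fun t : ℝ => cos (k * π * p.1) * cos (l * π * t)) p.2)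
    (-deriv (fun t : ℝ => cos (k * π * t) * cos (l * π * p.2)) p.1)

theorem tmField_eq (k l : ℝ) :
    tmField k l = fun p => vec2 (k * π * cosSin k l p) (l * π * cosSin l k p.swap) := by
  ext p : 1
  rw [tmField, (((hasDerivAt_id' p.1).const_mul (k * π)).sin.mul_const _).deriv,
    (((hasDerivAt_id' p.2).const_mul (l * π)).sin.const_mul _).deriv]
  simp only [cosSin, Prod.fst_swap, Prod.snd_swap]
  congr 1 <;> ring

theorem teField_eq (k l : ℝ) :
    teField k l = fun p => vec2 (-(l * π) * cosSin k l p) (k * π * cosSin l k p.swap) := by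
  ext p : 1
  rw [teField, (((hasDerivAt_id' p.2).const_mul (l * π)).cos.const_mul _).deriv,
    (((hasDerivAt_id' p.1).const_mul (k * π)).cos.mul_const _).deriv]
  simp only [cosSin, Prod.fst_swap, Prod.snd_swap]
  congr 1 <;> ring

theorem memLp_tmField (k l : ℝ) : MemLp (tmField k l) 2 μΓ := by
  rw [tmField_eq]
  exact Continuous.memLp_of_ae_mem_isCompact isCompact_closedUnitSquare ae_mem_closedUnitSquare
    (by fun_prop) 2

theorem memLp_teField (k l : ℝ) : MemLp (teField k l) 2 μΓ := by
  rw [teField_eq]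
  exact Continuous.memLp_of_ae_mem_isCompact isCompact_closedUnitSquare ae_mem_closedUnitSquare
    (by fun_prop) 2

theorem inner_toLp_tmField (k l : ℝ) (g : Lp (EuclideanSpace ℝ (Fin 2)) 2 μΓ) :
    inner ℝ ((memLp_tmField k l).toLp (tmField k l)) g =
      k * π * ∫ p, cosSin k l p * g p 0 ∂μΓ + l * π * ∫ p, cosSin l k p * g p.swap 1 ∂μΓ := by
  rw [inner_toLp_eq_of_ae_eq_vec2 _ _ _ (.of_forall (congrFun (tmField_eq k l))),
    ← integral_comp_swap_unitSquare fun p => cosSin l k p * g p.swap 1]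
  simp only [Prod.swap_swap]

theorem inner_toLp_teField (k l : ℝ) (g : Lp (EuclideanSpace ℝ (Fin 2)) 2 μΓ) :
    inner ℝ ((memLp_teField k l).toLp (teField k l)) g =
      -(l * π) * ∫ p, cosSin k l p * g p 0 ∂μΓ + k * π * ∫ p, cosSin l k p * g p.swap 1 ∂μΓ := by
  rw [inner_toLp_eq_of_ae_eq_vec2 _ _ _ (.of_forall (congrFun (teField_eq k l))),
    ← integral_comp_swap_unitSquare fun p => cosSin l k p * g p.swap 1]
  simp only [Prod.swap_swap]

-- The matrix `π [[k, l], [-l, k]]` has determinant `π² (k² + l²)`. When `k = 0` or `l = 0` the TM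
-- relation is absent, but then `a` or `b` vanishes trivially.
theorem eq_zero_of_mode_relations {k l : ℕ} {a b : ℝ}
    (hTM : 1 ≤ k → 1 ≤ l → k * π * a + l * π * b = 0)
    (hTE : (k, l) ≠ (0, 0) → -(l * π) * a + k * π * b = 0)
    (ha : l = 0 → a = 0) (hb : k = 0 → b = 0) : a = 0 ∧ b = 0 := by
  rcases Nat.eq_zero_or_pos k with rfl | hk <;> rcases Nat.eq_zero_or_pos l with rfl | hl
  · exact ⟨ha rfl, hb rfl⟩
  · have h := hTE (by simp [hl.ne'])
    refine ⟨(mul_eq_zero.1 ?_).resolve_left (by positivity : (l : ℝ) * π ≠ 0), hb rfl⟩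
    linear_combination -h
  · have h := hTE (by simp [hk.ne'])
    refine ⟨ha rfl, (mul_eq_zero.1 ?_).resolve_left (by positivity : (k : ℝ) * π ≠ 0)⟩
    linear_combination h
  · have hdet : ((k : ℝ) ^ 2 + l ^ 2) * π ≠ 0 := by positivity
    have h1 := hTM hk hl
    have h2 := hTE (by simp [hk.ne'])
    exact ⟨(mul_eq_zero.1 (by linear_combination (k : ℝ) * h1 - (l : ℝ) * h2)).resolve_left hdet,
      (mul_eq_zero.1 (by linear_combination (l : ℝ) * h1 + (k : ℝ) * h2)).resolve_left hdet⟩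

theorem eq_zero_of_forall_inner_tmField_teField_eq_zero (g : Lp (EuclideanSpace ℝ (Fin 2)) 2 μΓ)
    (hTM : ∀ k l : ℕ, 1 ≤ k → 1 ≤ l →
      inner ℝ ((memLp_tmField k l).toLp (tmField k l)) g = 0)
    (hTE : ∀ k l : ℕ, (k, l) ≠ (0, 0) →
      inner ℝ ((memLp_teField k l).toLp (teField k l)) g = 0) :
    g = 0 := by
  have hcoeff (k l : ℕ) : ∫ p, cosSin k l p * g p 0 ∂μΓ = 0 ∧
      ∫ p, cosSin l k p * g p.swap 1 ∂μΓ = 0 :=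
    eq_zero_of_mode_relations (fun hk hl => inner_toLp_tmField k l g ▸ hTM k l hk hl)
      (fun hkl => inner_toLp_teField k l g ▸ hTE k l hkl)
      (by rintro rfl; simp) (by rintro rfl; simp)
  have hg0 : (fun p => g p 0) =ᵐ[μΓ] 0 :=
    ae_eq_zero_of_forall_integral_cosSin_mul_eq_zero
      ((Lp.memLp_apply g 0).integrable one_le_two) fun k l => (hcoeff k l).1
  have hg1 : (fun p => g p.swap 1) =ᵐ[μΓ] 0 :=
    ae_eq_zero_of_forall_integral_cosSin_mul_eq_zero
      (((Lp.memLp_apply g 1).comp_measurePreserving measurePreserving_swap_unitSquare).integrable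
        one_le_two) fun k l => (hcoeff l k).2
  rw [Lp.eq_zero_iff_ae_eq_zero]
  filter_upwards [hg0, measurePreserving_swap_unitSquare.quasiMeasurePreserving.ae_eq_comp hg1]
    with p h0 h1
  ext i
  fin_cases i
  · exact h0
  · exact h1

/-- The linear span of the TM vector modes `∇E_{kl}` (`k, l ≥ 1`, with
`E_{kl}(x,y) = sin(kπx) sin(lπy)`) together with the TE vector modes
`curl_Γ H_{kl} = (∂₂H_{kl}, −∂₁H_{kl})` (`(k,l) ≠ (0,0)`, with
`H_{kl}(x,y) = cos(kπx) cos(lπy)`) is dense in `L²((0,1)²; ℝ²)`. -/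
theorem TM_TE_vector_modes_span_dense_L2 :
    Dense ((Submodule.span ℝ
      ({ f : Lp (EuclideanSpace ℝ (Fin 2)) 2
            (volume.restrict (Set.Ioo (0 : ℝ) 1 ×ˢ Set.Ioo (0 : ℝ) 1)) |
        ∃ k l : ℕ, 1 ≤ k ∧ 1 ≤ l ∧
          f =ᵐ[volume.restrict (Set.Ioo (0 : ℝ) 1 ×ˢ Set.Ioo (0 : ℝ) 1)]
            fun p : ℝ × ℝ =>
              vec2 (deriv (fun t : ℝ => sin (k * π * t) * sin (l * π * p.2)) p.1)
                   (deriv (fun t : ℝ => sin (k * π * p.1) * sin (l * π * t)) p.2) } ∪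
       { f : Lp (EuclideanSpace ℝ (Fin 2)) 2
            (volume.restrict (Set.Ioo (0 : ℝ) 1 ×ˢ Set.Ioo (0 : ℝ) 1)) |
        ∃ k l : ℕ, (k, l) ≠ (0, 0) ∧
          f =ᵐ[volume.restrict (Set.Ioo (0 : ℝ) 1 ×ˢ Set.Ioo (0 : ℝ) 1)]
            fun p : ℝ × ℝ =>
              vec2 (deriv (fun t : ℝ => cos (k * π * p.1) * cos (l * π * t)) p.2)
                   (-deriv (fun t : ℝ => cos (k * π * t) * cos (l * π * p.2)) p.1) }) :
      Submodule ℝ (Lp (EuclideanSpace ℝ (Fin 2)) 2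
        (volume.restrict (Set.Ioo (0 : ℝ) 1 ×ˢ Set.Ioo (0 : ℝ) 1)))) :
      Set (Lp (EuclideanSpace ℝ (Fin 2)) 2
        (volume.restrict (Set.Ioo (0 : ℝ) 1 ×ˢ Set.Ioo (0 : ℝ) 1)))) := by
  rw [Submodule.dense_iff_topologicalClosure_eq_top, Submodule.topologicalClosure_eq_top_iff,
    Submodule.eq_bot_iff]
  intro g hg
  rw [Submodule.mem_orthogonal] at hg
  exact eq_zero_of_forall_inner_tmField_teField_eq_zero g
    (fun k l hk hl => hg _ (Submodule.subset_span
      (.inl ⟨k, l, hk, hl, (memLp_tmField k l).coeFn_toLp⟩)))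
    (fun k l hkl => hg _ (Submodule.subset_span
      (.inr ⟨k, l, hkl, (memLp_teField k l).coeFn_toLp⟩)))
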